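/- Let U ⊆ ℝ³ be open and let u, v : ℝ³ → ℝ be smooth with v_x > 0 on U. Define on U: F := −((¼·u_x² + u_y)·v_x + u_x·√(v_x) − log v_x), G := 2·√(v_x) − u_x·v_x, R := v_t − F, S := v_y − G, F_p := −(¼·u_x² + u_y + u_x/(2·√(v_x)) − v_x⁻¹), G_p := 1/√(v_x) − u_x, and E := u_tx + (−¼·u_x² + u_y)·u_xx − (3/2)·u_x·u_xy − u_yy. Then the identity ∂_y R − ∂_t S + F_p·∂_x S − G_p·∂_x R = −v_x·E holds at every point of U. -/

import Mathlib

/-- Partial derivative with respect to the first coordinate `t` of `(t,x,y) : ℝ × ℝ × ℝ`. -/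
noncomputable def pd_t (f : ℝ × ℝ × ℝ → ℝ) (p : ℝ × ℝ × ℝ) : ℝ :=
  deriv (fun s => f (s, p.2.1, p.2.2)) p.1

/-- Partial derivative with respect to the second coordinate `x`. -/
noncomputable def pd_x (f : ℝ × ℝ × ℝ → ℝ) (p : ℝ × ℝ × ℝ) : ℝ :=
  deriv (fun s => f (p.1, s, p.2.2)) p.2.1

/-- Partial derivative with respect to the third coordinate `y`. -/
noncomputable def pd_y (f : ℝ × ℝ × ℝ → ℝ) (p : ℝ × ℝ × ℝ) : ℝ :=
  deriv (fun s => f (p.1, p.2.1, s)) p.2.2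

lemma curve_t (p : ℝ × ℝ × ℝ) :
    HasDerivAt (fun s : ℝ => ((s, p.2.1, p.2.2) : ℝ × ℝ × ℝ)) (1, 0, 0) p.1 :=
  (hasDerivAt_id _).prodMk ((hasDerivAt_const _ _).prodMk (hasDerivAt_const _ _))

lemma curve_x (p : ℝ × ℝ × ℝ) :
    HasDerivAt (fun s : ℝ => ((p.1, s, p.2.2) : ℝ × ℝ × ℝ)) (0, 1, 0) p.2.1 :=
  (hasDerivAt_const _ _).prodMk ((hasDerivAt_id _).prodMk (hasDerivAt_const _ _))

lemma curve_y (p : ℝ × ℝ × ℝ) :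
    HasDerivAt (fun s : ℝ => ((p.1, p.2.1, s) : ℝ × ℝ × ℝ)) (0, 0, 1) p.2.2 :=
  (hasDerivAt_const _ _).prodMk ((hasDerivAt_const _ _).prodMk (hasDerivAt_id _))

lemma slice_t (f : ℝ × ℝ × ℝ → ℝ) (p : ℝ × ℝ × ℝ) (hf : DifferentiableAt ℝ f p) :
    HasDerivAt (fun s => f (s, p.2.1, p.2.2)) (pd_t f p) p.1 := by
  have hd : DifferentiableAt ℝ (fun s => f (s, p.2.1, p.2.2)) p.1 :=
    hf.comp p.1 (differentiableAt_id.prodMk (differentiableAt_const _))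
  exact hd.hasDerivAt

lemma slice_x (f : ℝ × ℝ × ℝ → ℝ) (p : ℝ × ℝ × ℝ) (hf : DifferentiableAt ℝ f p) :
    HasDerivAt (fun s => f (p.1, s, p.2.2)) (pd_x f p) p.2.1 := by
  have hd : DifferentiableAt ℝ (fun s => f (p.1, s, p.2.2)) p.2.1 :=
    hf.comp p.2.1 ((differentiableAt_const _).prodMk (differentiableAt_id.prodMk (differentiableAt_const _)))
  exact hd.hasDerivAt

lemma slice_y (f : ℝ × ℝ × ℝ → ℝ) (p : ℝ × ℝ × ℝ) (hf : DifferentiableAt ℝ f p) :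
    HasDerivAt (fun s => f (p.1, p.2.1, s)) (pd_y f p) p.2.2 := by
  have hd : DifferentiableAt ℝ (fun s => f (p.1, p.2.1, s)) p.2.2 :=
    hf.comp p.2.2 ((differentiableAt_const _).prodMk ((differentiableAt_const _).prodMk differentiableAt_id))
  exact hd.hasDerivAt

lemma pd_t_eq (f : ℝ × ℝ × ℝ → ℝ) (p : ℝ × ℝ × ℝ) (hf : DifferentiableAt ℝ f p) :
    pd_t f p = fderiv ℝ f p (1, 0, 0) :=
  (hf.hasFDerivAt.comp_hasDerivAt p.1 (curve_t p)).deriv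

lemma pd_x_eq (f : ℝ × ℝ × ℝ → ℝ) (p : ℝ × ℝ × ℝ) (hf : DifferentiableAt ℝ f p) :
    pd_x f p = fderiv ℝ f p (0, 1, 0) :=
  (hf.hasFDerivAt.comp_hasDerivAt p.2.1 (curve_x p)).deriv

lemma pd_y_eq (f : ℝ × ℝ × ℝ → ℝ) (p : ℝ × ℝ × ℝ) (hf : DifferentiableAt ℝ f p) :
    pd_y f p = fderiv ℝ f p (0, 0, 1) :=
  (hf.hasFDerivAt.comp_hasDerivAt p.2.2 (curve_y p)).deriv

lemma contDiff_pd_t (f : ℝ × ℝ × ℝ → ℝ) (hf : ContDiff ℝ (⊤ : ℕ∞) f) : ContDiff ℝ (⊤ : ℕ∞) (pd_t f) := by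
  have : pd_t f = fun q => fderiv ℝ f q (1, 0, 0) :=
    funext fun q => pd_t_eq f q (hf.differentiable (by simp) q)
  rw [this]
  exact (hf.fderiv_right (by simp)).clm_apply contDiff_const

lemma contDiff_pd_x (f : ℝ × ℝ × ℝ → ℝ) (hf : ContDiff ℝ (⊤ : ℕ∞) f) : ContDiff ℝ (⊤ : ℕ∞) (pd_x f) := by
  have : pd_x f = fun q => fderiv ℝ f q (0, 1, 0) :=
    funext fun q => pd_x_eq f q (hf.differentiable (by simp) q)
  rw [this]
  exact (hf.fderiv_right (by simp)).clm_apply contDiff_const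

lemma contDiff_pd_y (f : ℝ × ℝ × ℝ → ℝ) (hf : ContDiff ℝ (⊤ : ℕ∞) f) : ContDiff ℝ (⊤ : ℕ∞) (pd_y f) := by
  have : pd_y f = fun q => fderiv ℝ f q (0, 0, 1) :=
    funext fun q => pd_y_eq f q (hf.differentiable (by simp) q)
  rw [this]
  exact (hf.fderiv_right (by simp)).clm_apply contDiff_const

lemma mixed_symm (f : ℝ × ℝ × ℝ → ℝ) (hf : ContDiff ℝ (⊤ : ℕ∞) f) (p e₁ e₂ : ℝ × ℝ × ℝ) :
    fderiv ℝ (fun q => fderiv ℝ f q e₂) p e₁ = fderiv ℝ (fun q => fderiv ℝ f q e₁) p e₂ := by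
  have hdf : Differentiable ℝ (fderiv ℝ f) := (hf.fderiv_right (m := 1) (by exact WithTop.coe_le_coe.mpr le_top)).differentiable (by simp)
  have key : ∀ e e' : ℝ × ℝ × ℝ,
      fderiv ℝ (fun q => fderiv ℝ f q e) p e' = fderiv ℝ (fderiv ℝ f) p e' e := by
    intro e e'
    have h : HasFDerivAt (fun q => fderiv ℝ f q e)
        ((ContinuousLinearMap.apply ℝ ℝ e).comp (fderiv ℝ (fderiv ℝ f) p)) p :=
      (ContinuousLinearMap.apply ℝ ℝ e).hasFDerivAt.comp p (hdf p).hasFDerivAt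
    rw [h.fderiv]
    rfl
  rw [key, key]
  exact second_derivative_symmetric (f' := fderiv ℝ f)
    (fun y => (hf.differentiable (by simp) y).hasFDerivAt)
    (hdf p).hasFDerivAt e₁ e₂

lemma pd_comm_xy (f : ℝ × ℝ × ℝ → ℝ) (hf : ContDiff ℝ (⊤ : ℕ∞) f) (p : ℝ × ℝ × ℝ) :
    pd_x (pd_y f) p = pd_y (pd_x f) p := by
  have e1 : pd_y f = fun q => fderiv ℝ f q (0, 0, 1) :=
    funext fun q => pd_y_eq f q (hf.differentiable (by simp) q)
  have e2 : pd_x f = fun q => fderiv ℝ f q (0, 1, 0) :=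
    funext fun q => pd_x_eq f q (hf.differentiable (by simp) q)
  rw [pd_x_eq _ _ ((contDiff_pd_y f hf).differentiable (by simp) p),
      pd_y_eq _ _ ((contDiff_pd_x f hf).differentiable (by simp) p), e1, e2,
      mixed_symm f hf]

lemma pd_comm_xt (f : ℝ × ℝ × ℝ → ℝ) (hf : ContDiff ℝ (⊤ : ℕ∞) f) (p : ℝ × ℝ × ℝ) :
    pd_x (pd_t f) p = pd_t (pd_x f) p := by
  have e1 : pd_t f = fun q => fderiv ℝ f q (1, 0, 0) :=
    funext fun q => pd_t_eq f q (hf.differentiable (by simp) q)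
  have e2 : pd_x f = fun q => fderiv ℝ f q (0, 1, 0) :=
    funext fun q => pd_x_eq f q (hf.differentiable (by simp) q)
  rw [pd_x_eq _ _ ((contDiff_pd_t f hf).differentiable (by simp) p),
      pd_t_eq _ _ ((contDiff_pd_x f hf).differentiable (by simp) p), e1, e2,
      mixed_symm f hf]

lemma pd_comm_ty (f : ℝ × ℝ × ℝ → ℝ) (hf : ContDiff ℝ (⊤ : ℕ∞) f) (p : ℝ × ℝ × ℝ) :
    pd_t (pd_y f) p = pd_y (pd_t f) p := by
  have e1 : pd_y f = fun q => fderiv ℝ f q (0, 0, 1) :=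
    funext fun q => pd_y_eq f q (hf.differentiable (by simp) q)
  have e2 : pd_t f = fun q => fderiv ℝ f q (1, 0, 0) :=
    funext fun q => pd_t_eq f q (hf.differentiable (by simp) q)
  rw [pd_t_eq _ _ ((contDiff_pd_y f hf).differentiable (by simp) p),
      pd_y_eq _ _ ((contDiff_pd_t f hf).differentiable (by simp) p), e1, e2,
      mixed_symm f hf]

/-- compatibility identity for the covering (41) (case κ = −3/2). -/
theorem covering_WE4_identity (U : Set (ℝ × ℝ × ℝ)) (hU : IsOpen U)
    (u v : ℝ × ℝ × ℝ → ℝ) (hu : ContDiff ℝ (⊤ : ℕ∞) u) (hv : ContDiff ℝ (⊤ : ℕ∞) v)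
    (hvx : ∀ q ∈ U, 0 < pd_x v q) :
    let F : ℝ × ℝ × ℝ → ℝ := fun q =>
      -(((1 / 4) * (pd_x u q) ^ 2 + pd_y u q) * pd_x v q
        + pd_x u q * Real.sqrt (pd_x v q) - Real.log (pd_x v q))
    let G : ℝ × ℝ × ℝ → ℝ := fun q => 2 * Real.sqrt (pd_x v q) - pd_x u q * pd_x v q
    let R : ℝ × ℝ × ℝ → ℝ := fun q => pd_t v q - F q
    let S : ℝ × ℝ × ℝ → ℝ := fun q => pd_y v q - G q
    let Fp : ℝ × ℝ × ℝ → ℝ := fun q =>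
      -((1 / 4) * (pd_x u q) ^ 2 + pd_y u q
        + pd_x u q / (2 * Real.sqrt (pd_x v q)) - (pd_x v q)⁻¹)
    let Gp : ℝ × ℝ × ℝ → ℝ := fun q => 1 / Real.sqrt (pd_x v q) - pd_x u q
    let E : ℝ × ℝ × ℝ → ℝ := fun q =>
      pd_t (pd_x u) q
      + (-(1 / 4) * (pd_x u q) ^ 2 + pd_y u q) * pd_x (pd_x u) q
      - (3 / 2) * pd_x u q * pd_y (pd_x u) q - pd_y (pd_y u) q
    ∀ p ∈ U,
      pd_y R p - pd_t S p + Fp p * pd_x S p - Gp p * pd_x R p = -(pd_x v p) * E p := by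
  intro F G R S Fp Gp E p hp
  have hvxp : 0 < pd_x v p := hvx p hp
  have hw : pd_x v p ≠ 0 := ne_of_gt hvxp
  have hux : ContDiff ℝ (⊤ : ℕ∞) (pd_x u) := contDiff_pd_x u hu
  have huy : ContDiff ℝ (⊤ : ℕ∞) (pd_y u) := contDiff_pd_y u hu
  have hvt : ContDiff ℝ (⊤ : ℕ∞) (pd_t v) := contDiff_pd_t v hv
  have hvx' : ContDiff ℝ (⊤ : ℕ∞) (pd_x v) := contDiff_pd_x v hv
  have hvy : ContDiff ℝ (⊤ : ℕ∞) (pd_y v) := contDiff_pd_y v hv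
  -- slice derivatives, y direction
  have hAy : HasDerivAt (fun s => pd_x u (p.1, p.2.1, s)) (pd_y (pd_x u) p) p.2.2 :=
    slice_y _ p (hux.differentiable (by simp) p)
  have hBy : HasDerivAt (fun s => pd_y u (p.1, p.2.1, s)) (pd_y (pd_y u) p) p.2.2 :=
    slice_y _ p (huy.differentiable (by simp) p)
  have hWy : HasDerivAt (fun s => pd_x v (p.1, p.2.1, s)) (pd_y (pd_x v) p) p.2.2 :=
    slice_y _ p (hvx'.differentiable (by simp) p)
  have hCy : HasDerivAt (fun s => pd_t v (p.1, p.2.1, s)) (pd_y (pd_t v) p) p.2.2 :=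
    slice_y _ p (hvt.differentiable (by simp) p)
  -- x direction
  have hAx : HasDerivAt (fun s => pd_x u (p.1, s, p.2.2)) (pd_x (pd_x u) p) p.2.1 :=
    slice_x _ p (hux.differentiable (by simp) p)
  have hBx : HasDerivAt (fun s => pd_y u (p.1, s, p.2.2)) (pd_x (pd_y u) p) p.2.1 :=
    slice_x _ p (huy.differentiable (by simp) p)
  have hWx : HasDerivAt (fun s => pd_x v (p.1, s, p.2.2)) (pd_x (pd_x v) p) p.2.1 :=
    slice_x _ p (hvx'.differentiable (by simp) p)
  have hCx : HasDerivAt (fun s => pd_t v (p.1, s, p.2.2)) (pd_x (pd_t v) p) p.2.1 :=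
    slice_x _ p (hvt.differentiable (by simp) p)
  have hDx : HasDerivAt (fun s => pd_y v (p.1, s, p.2.2)) (pd_x (pd_y v) p) p.2.1 :=
    slice_x _ p (hvy.differentiable (by simp) p)
  -- t direction
  have hAt : HasDerivAt (fun s => pd_x u (s, p.2.1, p.2.2)) (pd_t (pd_x u) p) p.1 :=
    slice_t _ p (hux.differentiable (by simp) p)
  have hWt : HasDerivAt (fun s => pd_x v (s, p.2.1, p.2.2)) (pd_t (pd_x v) p) p.1 :=
    slice_t _ p (hvx'.differentiable (by simp) p)
  have hDt : HasDerivAt (fun s => pd_y v (s, p.2.1, p.2.2)) (pd_t (pd_y v) p) p.1 :=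
    slice_t _ p (hvy.differentiable (by simp) p)
  -- derivative computations
  have hFy := (((((hAy.pow 2).const_mul ((1:ℝ)/4)).add hBy).mul hWy).add
      (hAy.mul (hWy.sqrt hw))).sub (hWy.log hw)
  have e1 : pd_y R p = _ := (hCy.sub hFy.neg).deriv
  have hGt := ((hWt.sqrt hw).const_mul (2:ℝ)).sub (hAt.mul hWt)
  have e2 : pd_t S p = _ := (hDt.sub hGt).deriv
  have hGx := ((hWx.sqrt hw).const_mul (2:ℝ)).sub (hAx.mul hWx)
  have e3 : pd_x S p = _ := (hDx.sub hGx).deriv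
  have hFx := (((((hAx.pow 2).const_mul ((1:ℝ)/4)).add hBx).mul hWx).add
      (hAx.mul (hWx.sqrt hw))).sub (hWx.log hw)
  have e4 : pd_x R p = _ := (hCx.sub hFx.neg).deriv
  rw [e1, e2, e3, e4]
  have hFp : Fp p = -((1 / 4) * (pd_x u p) ^ 2 + pd_y u p
      + pd_x u p / (2 * Real.sqrt (pd_x v p)) - (pd_x v p)⁻¹) := rfl
  have hGp : Gp p = 1 / Real.sqrt (pd_x v p) - pd_x u p := rfl
  have hE : E p = pd_t (pd_x u) p
      + (-(1 / 4) * (pd_x u p) ^ 2 + pd_y u p) * pd_x (pd_x u) p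
      - (3 / 2) * pd_x u p * pd_y (pd_x u) p - pd_y (pd_y u) p := rfl
  rw [hFp, hGp, hE, pd_comm_xy u hu p, pd_comm_xy v hv p, pd_comm_xt v hv p,
    pd_comm_ty v hv p]
  simp only [Prod.mk.eta, Pi.add_apply, Pi.pow_apply]
  have hs2 : Real.sqrt (pd_x v p) ^ 2 = pd_x v p := Real.sq_sqrt hvxp.le
  have hsq : Real.sqrt (pd_x v p) ≠ 0 := Real.sqrt_ne_zero'.mpr hvxp
  set sq := Real.sqrt (pd_x v p) with hsqd
  rw [← hs2]
  field_simp
  ring
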